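/- Soundness of subterm domain blocking: for every clause set M, if M is E-satisfiable then blsd(M) is E-satisfiable. -/

import Mathlib

namespace BUMG

/-- First-order terms over function symbols `F`, with variables indexed by `ℕ`. -/
inductive Term (F : Type) : Type where
  | var : ℕ → Term F
  | app : F → List (Term F) → Term F

namespace Term
variable {F : Type}

/-- The list of variables occurring in a term. -/
def vars : Term F → List ℕ
  | var n => [n]
  | app _ ts => ts.attach.flatMap (fun t => vars t.1)
decreasing_by simp_wf; have := List.sizeOf_lt_of_mem t.2; omega

/-- The function symbols (with the arity of the occurrence) occurring in a term. -/
def funcs : Term F → List (F × ℕ)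
  | var _ => []
  | app f ts => (f, ts.length) :: ts.attach.flatMap (fun t => funcs t.1)
decreasing_by simp_wf; have := List.sizeOf_lt_of_mem t.2; omega

/-- Applying a substitution to a term. -/
def subst (g : ℕ → Term F) : Term F → Term F
  | var n => g n
  | app f ts => app f (ts.attach.map (fun t => subst g t.1))
decreasing_by simp_wf; have := List.sizeOf_lt_of_mem t.2; omega

/-- The number of occurrences of symbols (variables and function symbols) in a term. -/
def size : Term F → ℕ
  | var _ => 1
  | app _ ts => 1 + (ts.attach.map (fun t => size t.1)).sum
decreasing_by simp_wf; have := List.sizeOf_lt_of_mem t.2; omega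

/-- A term is ground iff it contains no variables. -/
def IsGround (t : Term F) : Prop := t.vars = []

def isVar : Term F → Bool
  | var _ => true
  | app _ _ => false

/-- A proper functional term is a term that is neither a variable nor a constant. -/
def isPF : Term F → Bool
  | app _ (_ :: _) => true
  | _ => false

/-- The subterm relation. -/
inductive Subterm : Term F → Term F → Prop
  | refl (t : Term F) : Subterm t t
  | app {s t : Term F} {f : F} {ts : List (Term F)} :
      t ∈ ts → Subterm s t → Subterm s (app f ts)

end Term

/-- Atoms over predicate symbols `P` and function symbols `F`. -/
structure Atom (P F : Type) where
  pred : P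
  args : List (Term F)

namespace Atom
variable {P F : Type}

def subst (g : ℕ → Term F) (a : Atom P F) : Atom P F := ⟨a.pred, a.args.map (Term.subst g)⟩
def vars (a : Atom P F) : List ℕ := a.args.flatMap Term.vars
def IsGround (a : Atom P F) : Prop := a.vars = []
def funcs (a : Atom P F) : List (F × ℕ) := a.args.flatMap Term.funcs
/-- Whether the atom contains a proper functional term. -/
def hasPF (a : Atom P F) : Bool := a.args.any Term.isPF
def size (a : Atom P F) : ℕ := 1 + (a.args.map Term.size).sum

end Atom

/-- A clause `H₁ ∨ ... ∨ Hₘ ← B₁ ∧ ... ∧ Bₖ` with head atoms `heads`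
and body atoms `body`. -/
structure Clause (P F : Type) where
  heads : List (Atom P F)
  body : List (Atom P F)

namespace Clause
variable {P F : Type}

def atoms (C : Clause P F) : List (Atom P F) := C.heads ++ C.body
def vars (C : Clause P F) : List ℕ := C.atoms.flatMap Atom.vars
def bodyVars (C : Clause P F) : List ℕ := C.body.flatMap Atom.vars
def headVars (C : Clause P F) : List ℕ := C.heads.flatMap Atom.vars
def maxVar (C : Clause P F) : ℕ := C.vars.foldr max 0
def subst (g : ℕ → Term F) (C : Clause P F) : Clause P F :=
  ⟨C.heads.map (Atom.subst g), C.body.map (Atom.subst g)⟩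
/-- The predicate symbols (with the arity of the occurrence) occurring in a clause. -/
def preds (C : Clause P F) : List (P × ℕ) := C.atoms.map (fun a => (a.pred, a.args.length))
/-- The function symbols (with the arity of the occurrence) occurring in a clause. -/
def funcs (C : Clause P F) : List (F × ℕ) := C.atoms.flatMap Atom.funcs
/-- The number of occurrences of symbols in a clause. -/
def size (C : Clause P F) : ℕ := (C.atoms.map Atom.size).sum

/-- A clause is range-restricted iff every variable occurring in it occurs in its body. -/
def RangeRestricted (C : Clause P F) : Prop := ∀ v ∈ C.vars, v ∈ C.bodyVars

/-- A Bernays–Schönfinkel clause: every functional term occurring in it is a constant. -/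
def BS (C : Clause P F) : Prop := ∀ fn ∈ C.funcs, fn.2 = 0

end Clause

/-- A clause set is range-restricted iff all its clauses are. -/
def RangeRestrictedSet {P F : Type} (M : Set (Clause P F)) : Prop :=
  ∀ C ∈ M, C.RangeRestricted

/-- The predicate symbols (with arities) occurring in a clause set. -/
def predsOf {P F : Type} (M : Set (Clause P F)) : Set (P × ℕ) :=
  { pn | ∃ C ∈ M, pn ∈ C.preds }

/-- The function symbols (with arities) occurring in a clause set. -/
def funcsOf {P F : Type} (M : Set (Clause P F)) : Set (F × ℕ) :=
  { fn | ∃ C ∈ M, fn ∈ C.funcs }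

/-- A signature: a set of predicate symbols with arities and
a set of function symbols with arities. -/
structure Sig (P F : Type) where
  preds : Set (P × ℕ)
  funcs : Set (F × ℕ)

/-- The clause set `M` is well-formed over the signature `σ`: all symbols occurring in `M`
belong to `σ` (with matching arities). -/
def WFSet {P F : Type} (σ : Sig P F) (M : Set (Clause P F)) : Prop :=
  ∀ C ∈ M, (∀ pn ∈ C.preds, pn ∈ σ.preds) ∧ (∀ fn ∈ C.funcs, fn ∈ σ.funcs)

/-- The total number of occurrences of symbols in a clause set. -/
noncomputable def setSize {P F : Type} (M : Set (Clause P F)) : ℕ :=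
  ∑ᶠ C ∈ M, C.size

/-! ### Herbrand semantics -/

/-- A substitution is ground iff it maps every variable to a ground term. -/
def GroundSubst {F : Type} (g : ℕ → Term F) : Prop := ∀ n, (g n).IsGround

/-- A (Herbrand) interpretation `I` (a set of ground atoms) satisfies a clause iff
it satisfies every ground instance of it. -/
def satClause {P F : Type} (I : Set (Atom P F)) (C : Clause P F) : Prop :=
  ∀ g : ℕ → Term F, GroundSubst g →
    (∀ a ∈ C.body, a.subst g ∈ I) → ∃ a ∈ C.heads, a.subst g ∈ I

/-- A clause set is satisfiable iff some Herbrand interpretation (a set of ground atoms)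
satisfies every ground instance of every clause of it. -/
def Satisfiable {P F : Type} (M : Set (Clause P F)) : Prop :=
  ∃ I : Set (Atom P F), (∀ a ∈ I, a.IsGround) ∧ ∀ C ∈ M, satClause I C

/-! ### Equality axioms and E-satisfiability -/

/-- The equality atom `s ≈ t` (`eqP` being the distinguished equality predicate `≈`). -/
def eqAtom {P F : Type} (eqP : P) (s t : Term F) : Atom P F := ⟨eqP, [s, t]⟩

def rangeVars {F : Type} (n : ℕ) : List (Term F) := (List.range n).map Term.var

def xsList {F : Type} (n : ℕ) : List (Term F) := (List.range n).map (fun i => Term.var (2*i))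
def ysList {F : Type} (n : ℕ) : List (Term F) := (List.range n).map (fun i => Term.var (2*i+1))
def eqConjList {P F : Type} (eqP : P) (n : ℕ) : List (Atom P F) :=
  (List.range n).map (fun i => eqAtom eqP (Term.var (2*i)) (Term.var (2*i+1)))

/-- The equality axioms `EAX`: `≈` is reflexive, symmetric, transitive and compatible with
the given function and predicate symbols. -/
def EAX {P F : Type} (eqP : P) (Ps : Set (P × ℕ)) (Fs : Set (F × ℕ)) : Set (Clause P F) :=
  { ⟨[eqAtom eqP (Term.var 0) (Term.var 0)], []⟩,
    ⟨[eqAtom eqP (Term.var 1) (Term.var 0)], [eqAtom eqP (Term.var 0) (Term.var 1)]⟩,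
    ⟨[eqAtom eqP (Term.var 0) (Term.var 2)],
      [eqAtom eqP (Term.var 0) (Term.var 1), eqAtom eqP (Term.var 1) (Term.var 2)]⟩ } ∪
  { D | ∃ fn ∈ Fs,
      D = ⟨[eqAtom eqP (Term.app fn.1 (xsList fn.2)) (Term.app fn.1 (ysList fn.2))],
           eqConjList eqP fn.2⟩ } ∪
  { D | ∃ pn ∈ Ps,
      D = ⟨[⟨pn.1, ysList pn.2⟩], ⟨pn.1, xsList pn.2⟩ :: eqConjList eqP pn.2⟩ }

/-- A clause set `M` is E-satisfiable iff `M` together with the equality axioms for the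
symbols occurring in `M` is satisfiable. -/
def ESatisfiable {P F : Type} (eqP : P) (M : Set (Clause P F)) : Prop :=
  Satisfiable (M ∪ EAX eqP (predsOf M) (funcsOf M))

/-! ### Range-restricting transformations -/

/-- The atom `dom(t)`. -/
def domAtom {P F : Type} (domP : P) (t : Term F) : Atom P F := ⟨domP, [t]⟩

/-- The term `c` for a constant `c`. -/
def cTerm {F : Type} (c : F) : Term F := Term.app c []

/-- The clause `dom(c) ← ⊤`. -/
def domcClause {P F : Type} (domP : P) (c : F) : Clause P F :=
  ⟨[domAtom domP (cTerm c)], []⟩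

/-- Range-restricting a clause (Step (2) of `crr`, Step (3) of `rr`):
`H ← B` becomes `H ← B ∧ dom(x₁) ∧ ... ∧ dom(xₖ)` where `x₁,...,xₖ` are the variables
occurring in the head but not in the body. -/
def rangeRestrictClause {P F : Type} (domP : P) (C : Clause P F) : Clause P F :=
  ⟨C.heads, C.body ++
    ((C.headVars.filter (fun v => v ∉ C.bodyVars)).dedup).map
      (fun v => domAtom domP (Term.var v))⟩

/-- The argument list of the term abstraction of an atom: argument positions holding
non-variable terms are replaced by fresh variables. -/
def abstrArgs {F : Type} (base : ℕ) (ts : List (Term F)) : List (Term F) :=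
  ts.mapIdx (fun i t => if t.isVar then t else Term.var (base + i))

/-- Step (2) of the `rr` transformation: for each clause `H ← B` of `M`, each body atom
`P(t₁,...,tₙ)` of `B` with term abstraction `P(s₁,...,sₙ)` and abstraction substitution `α`,
the clauses `dom(xᵢ)α ← P(s₁,...,sₙ)` for every `xᵢ` in the domain of `α`. -/
def step2Set {P F : Type} (domP : P) (M : Set (Clause P F)) : Set (Clause P F) :=
  { D | ∃ C ∈ M, ∃ a ∈ C.body, ∃ i : Fin a.args.length,
        (a.args.get i).isVar = false ∧
        D = ⟨[domAtom domP (a.args.get i)],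
             [⟨a.pred, abstrArgs (C.maxVar + 1) a.args⟩]⟩ }

/-- Step (4) of the `rr` transformation: the clauses `dom(xᵢ) ← P(x₁,...,xₙ)` for every
`n`-ary predicate symbol `P` of the signature and every `1 ≤ i ≤ n`. -/
def step4Set {P F : Type} (domP : P) (Ps : Set (P × ℕ)) : Set (Clause P F) :=
  { D | ∃ pn ∈ Ps, ∃ i, i < pn.2 ∧
        D = ⟨[domAtom domP (Term.var i)], [⟨pn.1, rangeVars pn.2⟩]⟩ }

/-- Step (5) of the `rr` transformation: the clauses `dom(xᵢ) ← dom(f(x₁,...,xₙ))` for every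
`n`-ary function symbol `f` of the signature and every `1 ≤ i ≤ n`. -/
def step5Set {P F : Type} (domP : P) (Fs : Set (F × ℕ)) : Set (Clause P F) :=
  { D | ∃ fn ∈ Fs, ∃ i, i < fn.2 ∧
        D = ⟨[domAtom domP (Term.var i)],
             [domAtom domP (Term.app fn.1 (rangeVars fn.2))]⟩ }

/-- The new range-restricting transformation `rr` (over the signature `σ`, with fresh unary
predicate symbol `dom` and constant `c`): the clauses of `M`, the clause `dom(c) ← ⊤` and
the Step-(2) clauses, all range-restricted by Step (3), together with the Step-(4) and
Step-(5) clauses. -/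
def rr {P F : Type} [DecidableEq P] [DecidableEq F] (σ : Sig P F) (domP : P) (c : F)
    (M : Set (Clause P F)) : Set (Clause P F) :=
  (rangeRestrictClause domP '' (M ∪ {domcClause domP c} ∪ step2Set domP M))
  ∪ step4Set domP σ.preds ∪ step5Set domP σ.funcs

/-- Step (3) of the classical transformation `crr`: the clauses
`dom(f(x₁,...,xₙ)) ← dom(x₁) ∧ ... ∧ dom(xₙ)` enumerating the Herbrand universe. -/
def crrStep3 {P F : Type} (domP : P) (Fs : Set (F × ℕ)) : Set (Clause P F) :=
  { D | ∃ fn ∈ Fs,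
        D = ⟨[domAtom domP (Term.app fn.1 (rangeVars fn.2))],
             (List.range fn.2).map (fun i => domAtom domP (Term.var i))⟩ }

/-- The classical range-restricting transformation `crr`. -/
def crr {P F : Type} [DecidableEq P] [DecidableEq F] (σ : Sig P F) (domP : P) (c : F)
    (M : Set (Clause P F)) : Set (Clause P F) :=
  (rangeRestrictClause domP '' (M ∪ {domcClause domP c})) ∪ crrStep3 domP σ.funcs

/-! ### Shifting -/

/-- Partial flattening of the arguments of a non-equational body atom: top-level proper
functional terms are replaced by fresh variables. The `j`-th body atom uses the fresh
variables `base + Nat.pair j i`. -/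
def pfArgs {P F : Type} [DecidableEq P] (eqP : P) (base j : ℕ) (a : Atom P F) : Atom P F :=
  if a.pred = eqP then a
  else ⟨a.pred, a.args.mapIdx (fun i t => if t.isPF then Term.var (base + Nat.pair j i) else t)⟩

/-- The equations `tᵢ ≈ xᵢ` introduced by partially flattening a body atom. -/
def pfEqs {P F : Type} [DecidableEq P] (eqP : P) (base j : ℕ) (a : Atom P F) :
    List (Atom P F) :=
  if a.pred = eqP then []
  else (a.args.mapIdx (fun i t => (i, t))).filterMap
        (fun p => if p.2.isPF then
            some (eqAtom eqP p.2 (Term.var (base + Nat.pair j p.1))) else none)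

/-- Partial flattening of a clause. -/
def pfClause {P F : Type} [DecidableEq P] (eqP : P) (C : Clause P F) : Clause P F :=
  ⟨C.heads,
   C.body.mapIdx (fun j a => pfArgs eqP (C.maxVar + 1) j a) ++
   (C.body.mapIdx (fun j a => pfEqs eqP (C.maxVar + 1) j a)).flatten⟩

/-- The reflexivity unit clause `x ≈ x ← ⊤`. -/
def reflClause {P F : Type} (eqP : P) : Clause P F :=
  ⟨[eqAtom eqP (Term.var 0) (Term.var 0)], []⟩

/-- The partial flattening transformation `pf`. -/
def pf {P F : Type} [DecidableEq P] (eqP : P) (M : Set (Clause P F)) : Set (Clause P F) :=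
  pfClause eqP '' M ∪ {reflClause eqP}

/-- The atom `P̄(t₁,...,tₙ)` for the atom `P(t₁,...,tₙ)`, where `bar` maps each predicate
symbol `P` to the fresh predicate symbol `P̄` uniquely associated with it. -/
def barAtom {P F : Type} (bar : P → P) (a : Atom P F) : Atom P F := ⟨bar a.pred, a.args⟩

/-- Basic shifting of a clause: the body atoms containing a proper functional term are
moved, negated (via `bar`), into the head. -/
def bsClause {P F : Type} (bar : P → P) (C : Clause P F) : Clause P F :=
  ⟨C.heads ++ (C.body.filter (fun a => a.hasPF)).map (barAtom bar),
   C.body.filter (fun a => !a.hasPF)⟩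

/-- The predicate symbols (with arities) of shifted atoms of `M`. -/
def shiftedPreds {P F : Type} (M : Set (Clause P F)) : Set (P × ℕ) :=
  { pn | ∃ C ∈ M, ∃ a ∈ C.body, a.hasPF = true ∧ pn = (a.pred, a.args.length) }

/-- The basic shifting transformation `bs`: shift deep body atoms and add the shifted atom
consistency clauses `⊥ ← P(x₁,...,xₙ) ∧ P̄(x₁,...,xₙ)`. -/
def bs {P F : Type} (bar : P → P) (M : Set (Clause P F)) : Set (Clause P F) :=
  bsClause bar '' M ∪
  { D | ∃ pn ∈ shiftedPreds M,
        D = ⟨[], [⟨pn.1, rangeVars pn.2⟩, ⟨bar pn.1, rangeVars pn.2⟩]⟩ }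

/-- The shifting transformation: `sh(M) = bs(pf(M))`. -/
def sh {P F : Type} [DecidableEq P] (eqP : P) (bar : P → P) (M : Set (Clause P F)) :
    Set (Clause P F) :=
  bs bar (pf eqP M)

/-! ### Blocking -/

/-- The head `x ≈ y ∨ x ≉ y` of the blocking clauses. -/
def blockSplitHead {P F : Type} (eqP neqP : P) : List (Atom P F) :=
  [eqAtom eqP (Term.var 0) (Term.var 1), eqAtom neqP (Term.var 0) (Term.var 1)]

/-- The clause `⊥ ← x ≈ y ∧ x ≉ y`. -/
def eqNeqBot {P F : Type} (eqP neqP : P) : Clause P F :=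
  ⟨[], [eqAtom eqP (Term.var 0) (Term.var 1), eqAtom neqP (Term.var 0) (Term.var 1)]⟩

/-- The unrestricted domain blocking transformation `blud`. -/
def blud {P F : Type} (domP eqP neqP : P) (M : Set (Clause P F)) : Set (Clause P F) :=
  M ∪ { ⟨blockSplitHead eqP neqP, [domAtom domP (Term.var 0), domAtom domP (Term.var 1)]⟩,
        eqNeqBot eqP neqP }

/-- The atom `sub(s,t)`. -/
def subAtom {P F : Type} (subP : P) (s t : Term F) : Atom P F := ⟨subP, [s, t]⟩

/-- The axioms describing the subterm relationship: `sub(x,x) ← dom(x)` and, for every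
`n`-ary function symbol `f` of the signature and `1 ≤ i ≤ n`,
`sub(x, f(x₁,...,xₙ)) ← sub(x,xᵢ) ∧ dom(x) ∧ dom(f(x₁,...,xₙ))`. -/
def subClauses {P F : Type} (domP subP : P) (Fs : Set (F × ℕ)) : Set (Clause P F) :=
  { ⟨[subAtom subP (Term.var 0) (Term.var 0)], [domAtom domP (Term.var 0)]⟩ } ∪
  { D | ∃ fn ∈ Fs, ∃ i, i < fn.2 ∧
        D = ⟨[subAtom subP (Term.var fn.2) (Term.app fn.1 (rangeVars fn.2))],
             [subAtom subP (Term.var fn.2) (Term.var i),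
              domAtom domP (Term.var fn.2),
              domAtom domP (Term.app fn.1 (rangeVars fn.2))]⟩ }

/-- The subterm domain blocking transformation `blsd`. -/
def blsd {P F : Type} (σ : Sig P F) (domP eqP neqP subP : P) (M : Set (Clause P F)) :
    Set (Clause P F) :=
  M ∪ subClauses domP subP σ.funcs ∪
  { ⟨blockSplitHead eqP neqP, [subAtom subP (Term.var 0) (Term.var 1)]⟩,
    eqNeqBot eqP neqP }

/-- The subterm predicate blocking transformation `blsp`. -/
def blsp {P F : Type} (σ : Sig P F) (domP eqP neqP subP : P) (M : Set (Clause P F)) :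
    Set (Clause P F) :=
  M ∪ subClauses domP subP σ.funcs ∪
  { D | ∃ p : P, (p, 1) ∈ σ.preds ∧
        D = ⟨blockSplitHead eqP neqP,
             [subAtom subP (Term.var 0) (Term.var 1),
              ⟨p, [Term.var 0]⟩, ⟨p, [Term.var 1]⟩]⟩ } ∪
  { eqNeqBot eqP neqP }

/-- The unrestricted predicate blocking transformation `blup`. -/
def blup {P F : Type} (σ : Sig P F) (domP eqP neqP : P) (M : Set (Clause P F)) :
    Set (Clause P F) :=
  M ∪ { D | ∃ p : P, (p, 1) ∈ σ.preds ∧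
        D = ⟨blockSplitHead eqP neqP, [⟨p, [Term.var 0]⟩, ⟨p, [Term.var 1]⟩]⟩ } ∪
  { eqNeqBot eqP neqP }

/-! ### Combined transformations -/

/-- The base transformations `rr`, `sh∘rr`, `crr`, `sh∘crr`
(composition read left-to-right, so `(sh∘rr)(M) = rr(sh(M))`). -/
inductive BaseTr | rr | shrr | crr | shcrr

/-- The optional blocking transformations. -/
inductive BlockTr | id | blsd | blsp | blud | blup

def applyBase {P F : Type} [DecidableEq P] [DecidableEq F] (σ : Sig P F) (domP : P) (c : F)
    (eqP : P) (bar : P → P) : BaseTr → Set (Clause P F) → Set (Clause P F)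
  | .rr, M => rr σ domP c M
  | .shrr, M => rr σ domP c (sh eqP bar M)
  | .crr, M => crr σ domP c M
  | .shcrr, M => crr σ domP c (sh eqP bar M)

def applyBlock {P F : Type} (σ : Sig P F) (domP eqP neqP subP : P) :
    BlockTr → Set (Clause P F) → Set (Clause P F)
  | .id, M => M
  | .blsd, M => blsd σ domP eqP neqP subP M
  | .blsp, M => blsp σ domP eqP neqP subP M
  | .blud, M => blud domP eqP neqP M
  | .blup, M => blup σ domP eqP neqP M

/-- A combined transformation: a base transformation optionally followed by a blocking
transformation (composition read left-to-right). -/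
def applyTr {P F : Type} [DecidableEq P] [DecidableEq F] (σ : Sig P F) (domP : P) (c : F)
    (eqP neqP subP : P) (bar : P → P) (b : BaseTr) (τ : BlockTr) (M : Set (Clause P F)) :
    Set (Clause P F) :=
  applyBlock σ domP eqP neqP subP τ (applyBase σ domP c eqP bar b M)

/-- The clause `x ≈ x ← dom(x)`. -/
def reflDomClause {P F : Type} (domP eqP : P) : Clause P F :=
  ⟨[eqAtom eqP (Term.var 0) (Term.var 0)], [domAtom domP (Term.var 0)]⟩

end BUMG

/-!
Let `I` be a Herbrand model of `M` together with its equality axioms. First, `≈` is made a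
congruence for every function symbol, not only for those occurring in `M`: pull `I` back along
the map `collapse` that replaces each maximal subterm whose head symbol does not occur in `M` by
a fixed ground constant. Clauses of `M` and their equality axioms only contain symbols of `M`,
so they survive the pullback, while the congruence axiom of any other symbol becomes an instance
of reflexivity. Second, interpret every `sub` atom as true and `s ≉ t` as the complement of
`s ≈ t`: the blocking clauses then hold by construction, congruence for `≉` follows from
symmetry and transitivity of `≈`, and since `sub` and `≉` are fresh, no other clause changes.
-/

namespace BUMG

namespace Term
variable {F : Type}

theorem ind {motive : Term F → Prop} (var : ∀ n, motive (.var n))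
    (app : ∀ f ts, (∀ t ∈ ts, motive t) → motive (.app f ts)) : ∀ t, motive t
  | .var n => var n
  | .app f ts => app f ts fun t _ => ind var app t
decreasing_by simp_wf; have := List.sizeOf_lt_of_mem ‹t ∈ ts›; omega

@[simp] theorem subst_var (g : ℕ → Term F) (n : ℕ) : (var n).subst g = g n := by
  rw [subst]

@[simp] theorem subst_app (g : ℕ → Term F) (f : F) (ts : List (Term F)) :
    (app f ts).subst g = app f (ts.map (subst g)) := by
  rw [subst, List.attach_map_val]

@[simp] theorem vars_app (f : F) (ts : List (Term F)) :
    (app f ts).vars = ts.flatMap vars := by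
  rw [vars, List.flatMap_subtype (fun _ _ => rfl), List.unattach_attach]

@[simp] theorem funcs_var (n : ℕ) : (var n : Term F).funcs = [] := by
  rw [funcs]

@[simp] theorem funcs_app (f : F) (ts : List (Term F)) :
    (app f ts).funcs = (f, ts.length) :: ts.flatMap funcs := by
  rw [funcs, List.flatMap_subtype (fun _ _ => rfl), List.unattach_attach]

theorem isGround_var (n : ℕ) : ¬ (var n : Term F).IsGround := by
  simp [IsGround, vars]

theorem isGround_app {f : F} {ts : List (Term F)} :
    (app f ts).IsGround ↔ ∀ t ∈ ts, t.IsGround := by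
  simp [IsGround]

theorem isGround_subst {g : ℕ → Term F} (hg : GroundSubst g) (t : Term F) :
    (t.subst g).IsGround := by
  induction t using ind with
  | var n => simpa using hg n
  | app f ts ih => simpa [isGround_app] using ih

theorem nonempty_of_isGround {t : Term F} (ht : t.IsGround) : Nonempty F := by
  cases t with
  | var n => exact absurd ht (isGround_var n)
  | app f _ => exact ⟨f⟩

end Term

namespace Atom
variable {P F : Type}

theorem isGround_subst {g : ℕ → Term F} (hg : GroundSubst g) (a : Atom P F) :
    (a.subst g).IsGround := by
  simp only [subst, IsGround, vars, List.flatMap_map, List.flatMap_eq_nil_iff]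
  exact fun t _ => Term.isGround_subst hg t

end Atom

@[simp] theorem eqAtom_subst {P F : Type} (g : ℕ → Term F) (p : P) (s t : Term F) :
    (eqAtom p s t).subst g = eqAtom p (s.subst g) (t.subst g) := rfl

theorem eqAtom_inj {P F : Type} {p q : P} {s t s' t' : Term F} :
    eqAtom p s t = eqAtom q s' t' ↔ p = q ∧ s = s' ∧ t = t' := by
  simp [eqAtom]

section EqualityAxioms
variable {P F : Type}

def symmClause (eqP : P) : Clause P F :=
  ⟨[eqAtom eqP (Term.var 1) (Term.var 0)], [eqAtom eqP (Term.var 0) (Term.var 1)]⟩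

def transClause (eqP : P) : Clause P F :=
  ⟨[eqAtom eqP (Term.var 0) (Term.var 2)],
    [eqAtom eqP (Term.var 0) (Term.var 1), eqAtom eqP (Term.var 1) (Term.var 2)]⟩

def funcCongrClause (eqP : P) (f : F) (n : ℕ) : Clause P F :=
  ⟨[eqAtom eqP (Term.app f (xsList n)) (Term.app f (ysList n))], eqConjList eqP n⟩

def predCongrClause (eqP p : P) (n : ℕ) : Clause P F :=
  ⟨[⟨p, ysList n⟩], ⟨p, xsList n⟩ :: eqConjList eqP n⟩

variable {eqP : P} {Ps Ps' : Set (P × ℕ)} {Fs Fs' : Set (F × ℕ)} {C : Clause P F}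

theorem mem_EAX :
    C ∈ EAX eqP Ps Fs ↔ C = reflClause eqP ∨ C = symmClause eqP ∨ C = transClause eqP ∨
      (∃ fn ∈ Fs, C = funcCongrClause eqP fn.1 fn.2) ∨
      ∃ pn ∈ Ps, C = predCongrClause eqP pn.1 pn.2 := by
  simp only [EAX, reflClause, symmClause, transClause, funcCongrClause, predCongrClause,
    Set.mem_union, Set.mem_insert_iff, Set.mem_singleton_iff, Set.mem_ofPred_eq, or_assoc]

theorem predCongrClause_two (eqP p : P) :
    (predCongrClause eqP p 2 : Clause P F) =
      ⟨[eqAtom p (.var 1) (.var 3)],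
        [eqAtom p (.var 0) (.var 2), eqAtom eqP (.var 0) (.var 1),
          eqAtom eqP (.var 2) (.var 3)]⟩ := rfl

theorem funcs_subset_of_mem_EAX (hC : C ∈ EAX eqP Ps Fs) : ∀ fn ∈ C.funcs, fn ∈ Fs := by
  rcases mem_EAX.1 hC with rfl | rfl | rfl | ⟨fn, hfn, rfl⟩ | ⟨pn, -, rfl⟩ <;>
    simp [Clause.funcs, Clause.atoms, Atom.funcs, reflClause, symmClause, transClause,
      funcCongrClause, predCongrClause, eqAtom, eqConjList, xsList, ysList]
  exact hfn

theorem reflClause_mem_EAX : reflClause eqP ∈ EAX eqP Ps Fs := mem_EAX.2 (.inl rfl)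

theorem symmClause_mem_EAX : symmClause eqP ∈ EAX eqP Ps Fs := mem_EAX.2 (.inr (.inl rfl))

theorem transClause_mem_EAX : transClause eqP ∈ EAX eqP Ps Fs :=
  mem_EAX.2 (.inr (.inr (.inl rfl)))

theorem EAX_mono (hP : Ps ⊆ Ps') (hF : Fs ⊆ Fs') : EAX eqP Ps Fs ⊆ EAX eqP Ps' Fs' := by
  intro C hC
  rw [mem_EAX] at hC ⊢
  rcases hC with h | h | h | ⟨fn, hfn, h⟩ | ⟨pn, hpn, h⟩
  exacts [.inl h, .inr (.inl h), .inr (.inr (.inl h)), .inr (.inr (.inr (.inl ⟨fn, hF hfn, h⟩))),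
    .inr (.inr (.inr (.inr ⟨pn, hP hpn, h⟩)))]

theorem mem_EAX_or_eq_funcCongrClause (hC : C ∈ EAX eqP Ps Fs) (Fs' : Set (F × ℕ)) :
    C ∈ EAX eqP Ps Fs' ∨ ∃ fn ∉ Fs', C = funcCongrClause eqP fn.1 fn.2 := by
  rcases mem_EAX.1 hC with h | h | h | ⟨fn, -, rfl⟩ | h
  exacts [.inl (mem_EAX.2 (.inl h)), .inl (mem_EAX.2 (.inr (.inl h))),
    .inl (mem_EAX.2 (.inr (.inr (.inl h)))),
    (em (fn ∈ Fs')).imp (fun hfn => mem_EAX.2 (.inr (.inr (.inr (.inl ⟨fn, hfn, rfl⟩)))))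
      fun hfn => ⟨fn, hfn, rfl⟩,
    .inl (mem_EAX.2 (.inr (.inr (.inr (.inr h)))))]

theorem mem_EAX_insert {pn : P × ℕ} :
    C ∈ EAX eqP (insert pn Ps) Fs ↔ C = predCongrClause eqP pn.1 pn.2 ∨ C ∈ EAX eqP Ps Fs := by
  simp only [mem_EAX, Set.mem_insert_iff, or_and_right, exists_or, exists_eq_left]
  grind

theorem pred_of_mem_atoms_of_mem_EAX (hC : C ∈ EAX eqP Ps Fs) {a : Atom P F}
    (ha : a ∈ C.atoms) : a.pred = eqP ∨ (a.pred, a.args.length) ∈ Ps := by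
  rcases mem_EAX.1 hC with rfl | rfl | rfl | ⟨fn, -, rfl⟩ | ⟨pn, hpn, rfl⟩ <;>
    simp [Clause.atoms, reflClause, symmClause, transClause, funcCongrClause, predCongrClause,
      eqAtom, eqConjList, xsList, ysList] at ha
  all_goals aesop

variable {K : Set (Atom P F)} {s t u : Term F}

theorem eqAtom_refl_mem (hK : satClause K (reflClause eqP)) (hs : s.IsGround) :
    eqAtom eqP s s ∈ K := by
  simpa [reflClause] using hK (fun _ => s) (fun _ => hs) (by simp [reflClause])

theorem eqAtom_symm_mem (hK : satClause K (symmClause eqP)) (hs : s.IsGround)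
    (ht : t.IsGround) (hst : eqAtom eqP s t ∈ K) : eqAtom eqP t s ∈ K := by
  simpa [symmClause] using hK (fun n => if n = 0 then s else t)
    (fun n => by dsimp only; split_ifs <;> assumption) (by simpa [symmClause] using hst)

theorem eqAtom_trans_mem (hK : satClause K (transClause eqP)) (hs : s.IsGround)
    (ht : t.IsGround) (hu : u.IsGround) (hst : eqAtom eqP s t ∈ K)
    (htu : eqAtom eqP t u ∈ K) : eqAtom eqP s u ∈ K := by
  simpa [transClause] using hK (fun n => if n = 0 then s else if n = 1 then t else u)
    (fun n => by dsimp only; split_ifs <;> assumption) (by simp [transClause, hst, htu])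

theorem satClause_predCongrClause_self (hsymm : satClause K (symmClause eqP))
    (htrans : satClause K (transClause eqP)) : satClause K (predCongrClause eqP eqP 2) := by
  rw [predCongrClause_two]
  intro g hg hb
  simp only [List.mem_cons, List.not_mem_nil, or_false,
    forall_eq_or_imp, forall_eq, eqAtom_subst, Term.subst_var] at hb
  obtain ⟨h02, h01, h23⟩ := hb
  refine ⟨_, List.mem_singleton_self _, ?_⟩
  simp only [eqAtom_subst, Term.subst_var]
  exact eqAtom_trans_mem htrans (hg 1) (hg 0) (hg 3) (eqAtom_symm_mem hsymm (hg 0) (hg 1) h01)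
    (eqAtom_trans_mem htrans (hg 0) (hg 2) (hg 3) h02 h23)

end EqualityAxioms

theorem satisfiable_of_isEmpty {P F : Type} [IsEmpty F] (M : Set (Clause P F)) :
    Satisfiable M :=
  ⟨∅, by simp, fun _ _ _ hg => (Term.nonempty_of_isGround (hg 0)).elim isEmptyElim⟩

section Collapse
variable {P F : Type} (S : Set (F × ℕ)) (d : Term F)

open Classical in
noncomputable def collapse : Term F → Term F
  | .var n => .var n
  | .app f ts => if (f, ts.length) ∈ S then .app f (ts.attach.map fun t => collapse t.1) else d
decreasing_by simp_wf; have := List.sizeOf_lt_of_mem t.2; omega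

noncomputable def collapseAtom (a : Atom P F) : Atom P F := ⟨a.pred, a.args.map (collapse S d)⟩

def collapsePreimage (I : Set (Atom P F)) : Set (Atom P F) :=
  {a | a.IsGround ∧ collapseAtom S d a ∈ I}

variable {S d}

theorem collapse_app_of_mem {f : F} {ts : List (Term F)} (h : (f, ts.length) ∈ S) :
    collapse S d (.app f ts) = .app f (ts.map (collapse S d)) := by
  rw [collapse, if_pos h, List.attach_map_val]

theorem collapse_app_of_not_mem {f : F} {ts : List (Term F)} (h : (f, ts.length) ∉ S) :
    collapse S d (.app f ts) = d := by
  rw [collapse, if_neg h]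

theorem isGround_collapse (hd : d.IsGround) {t : Term F} (ht : t.IsGround) :
    (collapse S d t).IsGround := by
  induction t using Term.ind with
  | var n => exact absurd ht (Term.isGround_var n)
  | app f ts ih =>
    by_cases hf : (f, ts.length) ∈ S
    · rw [Term.isGround_app] at ht
      simpa [collapse_app_of_mem hf, Term.isGround_app] using fun t ht' => ih t ht' (ht t ht')
    · rwa [collapse_app_of_not_mem hf]

theorem collapse_subst {g : ℕ → Term F} {t : Term F} (ht : ∀ fn ∈ t.funcs, fn ∈ S) :
    collapse S d (t.subst g) = t.subst (collapse S d ∘ g) := by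
  induction t using Term.ind with
  | var n => simp
  | app f ts ih =>
    simp only [Term.funcs_app, List.mem_cons, List.mem_flatMap, forall_eq_or_imp] at ht
    rw [Term.subst_app, collapse_app_of_mem (by simpa using ht.1), Term.subst_app,
      List.map_map]
    refine congrArg _ (List.map_congr_left fun t ht' => ih t ht' fun fn hfn => ?_)
    exact ht.2 fn ⟨t, ht', hfn⟩

@[simp] theorem collapseAtom_eqAtom (p : P) (s t : Term F) :
    collapseAtom S d (eqAtom p s t) = eqAtom p (collapse S d s) (collapse S d t) := rfl

theorem collapseAtom_subst {g : ℕ → Term F} {a : Atom P F} (ha : ∀ fn ∈ a.funcs, fn ∈ S) :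
    collapseAtom S d (a.subst g) = a.subst (collapse S d ∘ g) := by
  simp only [collapseAtom, Atom.subst, List.map_map]
  refine congrArg _ (List.map_congr_left fun t ht => collapse_subst fun fn hfn => ?_)
  exact ha fn (List.mem_flatMap.2 ⟨t, ht, hfn⟩)

theorem satClause_collapsePreimage (hd : d.IsGround) {I : Set (Atom P F)} {C : Clause P F}
    (hC : ∀ fn ∈ C.funcs, fn ∈ S) (hI : satClause I C) :
    satClause (collapsePreimage S d I) C := by
  intro g hg hb
  have hsubst : ∀ a ∈ C.atoms, collapseAtom S d (a.subst g) = a.subst (collapse S d ∘ g) :=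
    fun a ha => collapseAtom_subst fun fn hfn => hC fn (List.mem_flatMap.2 ⟨a, ha, hfn⟩)
  obtain ⟨a, ha, haI⟩ := hI (collapse S d ∘ g) (fun n => isGround_collapse hd (hg n))
    fun a ha => hsubst a (List.mem_append_right _ ha) ▸ (hb a ha).2
  exact ⟨a, ha, Atom.isGround_subst hg a, (hsubst a (List.mem_append_left _ ha)).symm ▸ haI⟩

theorem satClause_collapsePreimage_funcCongrClause (hd : d.IsGround) {I : Set (Atom P F)}
    {eqP : P} (hI : satClause I (reflClause eqP)) {f : F} {n : ℕ} (hf : (f, n) ∉ S) :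
    satClause (collapsePreimage S d I) (funcCongrClause eqP f n) := by
  intro g hg _
  refine ⟨_, List.mem_singleton_self _, Atom.isGround_subst hg _, ?_⟩
  simp only [eqAtom_subst, Term.subst_app, collapseAtom_eqAtom]
  rw [collapse_app_of_not_mem (by simpa [xsList] using hf),
    collapse_app_of_not_mem (by simpa [ysList] using hf)]
  exact eqAtom_refl_mem hI hd

end Collapse

theorem ESatisfiable.satisfiable_union_EAX {P F : Type} {eqP : P} {M : Set (Clause P F)}
    (hsat : ESatisfiable eqP M) (Fs : Set (F × ℕ)) :
    Satisfiable (M ∪ EAX eqP (predsOf M) Fs) := by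
  rcases isEmpty_or_nonempty F with hF | ⟨⟨c⟩⟩
  · exact satisfiable_of_isEmpty _
  obtain ⟨I, -, hI⟩ := hsat
  have hd : (Term.app c [] : Term F).IsGround := Term.isGround_app.2 (by simp)
  have hrefl : satClause I (reflClause eqP) := hI _ (Or.inr reflClause_mem_EAX)
  refine ⟨collapsePreimage (funcsOf M) (.app c []) I, fun a ha => ha.1, ?_⟩
  rintro C (hCM | hCE)
  · exact satClause_collapsePreimage hd (fun fn hfn => ⟨C, hCM, hfn⟩) (hI C (.inl hCM))
  rcases mem_EAX_or_eq_funcCongrClause hCE (funcsOf M) with hCE | ⟨fn, hfn, rfl⟩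
  · exact satClause_collapsePreimage hd (funcs_subset_of_mem_EAX hCE) (hI C (.inr hCE))
  · exact satClause_collapsePreimage_funcCongrClause hd hrefl hfn

section Blocking
variable {P F : Type} {eqP neqP subP : P} {K : Set (Atom P F)}

variable (eqP neqP subP K) in
def blockingModel : Set (Atom P F) :=
  {a | a.IsGround ∧ ((a.pred ≠ subP ∧ a.pred ≠ neqP ∧ a ∈ K) ∨ a.pred = subP ∨
    ∃ s t, a = eqAtom neqP s t ∧ eqAtom eqP s t ∉ K)}

theorem mem_of_mem_blockingModel {a : Atom P F} (hsub : a.pred ≠ subP) (hneq : a.pred ≠ neqP)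
    (ha : a ∈ blockingModel eqP neqP subP K) : a ∈ K := by
  rcases ha with ⟨-, ⟨-, -, h⟩ | h | ⟨s, t, rfl, -⟩⟩
  exacts [h, absurd h hsub, absurd rfl hneq]

theorem mem_blockingModel_of_mem (hK : ∀ a ∈ K, a.IsGround) {a : Atom P F}
    (hsub : a.pred ≠ subP) (hneq : a.pred ≠ neqP) (ha : a ∈ K) :
    a ∈ blockingModel eqP neqP subP K :=
  ⟨hK a ha, .inl ⟨hsub, hneq, ha⟩⟩

theorem eqAtom_not_mem_of_mem_blockingModel (hsubneq : subP ≠ neqP) {s t : Term F}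
    (h : eqAtom neqP s t ∈ blockingModel eqP neqP subP K) : eqAtom eqP s t ∉ K := by
  rcases h with ⟨-, ⟨-, h, -⟩ | h | ⟨s', t', h, hK⟩⟩
  · exact absurd rfl h
  · exact absurd h.symm hsubneq
  · obtain ⟨-, rfl, rfl⟩ := eqAtom_inj.1 h
    exact hK

theorem satClause_blockingModel_of_ne (hK : ∀ a ∈ K, a.IsGround) {C : Clause P F}
    (hC : ∀ a ∈ C.atoms, a.pred ≠ subP ∧ a.pred ≠ neqP) (hKC : satClause K C) :
    satClause (blockingModel eqP neqP subP K) C := by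
  intro g hg hb
  obtain ⟨a, ha, haK⟩ := hKC g hg fun a ha =>
    have hne := hC a (List.mem_append_right _ ha)
    mem_of_mem_blockingModel hne.1 hne.2 (hb a ha)
  have hne := hC a (List.mem_append_left _ ha)
  exact ⟨a, ha, mem_blockingModel_of_mem hK hne.1 hne.2 haK⟩

theorem satClause_blockingModel_of_mem_heads {C : Clause P F} {a : Atom P F}
    (ha : a ∈ C.heads) (hsub : a.pred = subP) :
    satClause (blockingModel eqP neqP subP K) C :=
  fun _ hg _ => ⟨a, ha, Atom.isGround_subst hg a, .inr (.inl hsub)⟩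

theorem satClause_blockingModel_blockSplit (hK : ∀ a ∈ K, a.IsGround) (hsub : eqP ≠ subP)
    (hneq : eqP ≠ neqP) (body : List (Atom P F)) :
    satClause (blockingModel eqP neqP subP K) ⟨blockSplitHead eqP neqP, body⟩ := by
  intro g hg _
  by_cases h : eqAtom eqP (g 0) (g 1) ∈ K
  · exact ⟨_, List.mem_cons_self .., mem_blockingModel_of_mem hK hsub hneq (by simpa using h)⟩
  · refine ⟨_, List.mem_cons_of_mem _ (List.mem_singleton_self _), Atom.isGround_subst hg _,
      .inr (.inr ⟨g 0, g 1, by simp, h⟩)⟩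

theorem satClause_blockingModel_eqNeqBot (hsubneq : subP ≠ neqP) (hsub : eqP ≠ subP)
    (hneq : eqP ≠ neqP) : satClause (blockingModel eqP neqP subP K) (eqNeqBot eqP neqP) := by
  intro _ _ hb
  simp only [eqNeqBot, List.mem_cons, List.not_mem_nil, or_false, forall_eq_or_imp,
    forall_eq, eqAtom_subst, Term.subst_var] at hb
  exact absurd (mem_of_mem_blockingModel hsub hneq hb.1)
    (eqAtom_not_mem_of_mem_blockingModel hsubneq hb.2)

theorem satClause_blockingModel_predCongrClause_neq (hsymm : satClause K (symmClause eqP))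
    (htrans : satClause K (transClause eqP)) (hsubneq : subP ≠ neqP) (hsub : eqP ≠ subP)
    (hneq : eqP ≠ neqP) :
    satClause (blockingModel eqP neqP subP K) (predCongrClause eqP neqP 2) := by
  rw [predCongrClause_two]
  intro g hg hb
  simp only [List.mem_cons, List.not_mem_nil, or_false, forall_eq_or_imp, forall_eq,
    eqAtom_subst, Term.subst_var] at hb
  obtain ⟨h02, h01, h23⟩ := hb
  have h02 := eqAtom_not_mem_of_mem_blockingModel hsubneq h02
  have h01 := mem_of_mem_blockingModel hsub hneq h01
  have h23 := mem_of_mem_blockingModel hsub hneq h23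
  refine ⟨_, List.mem_singleton_self _, Atom.isGround_subst hg _,
    .inr (.inr ⟨g 1, g 3, by simp, fun h13 => h02 ?_⟩)⟩
  exact eqAtom_trans_mem htrans (hg 0) (hg 1) (hg 2) h01
    (eqAtom_trans_mem htrans (hg 1) (hg 3) (hg 2) h13 (eqAtom_symm_mem hsymm (hg 2) (hg 3) h23))

theorem satClause_blockingModel_of_mem_EAX {Ps : Set (P × ℕ)} {Fs : Set (F × ℕ)}
    (hKg : ∀ a ∈ K, a.IsGround)
    (hK : ∀ C ∈ EAX eqP Ps Fs, satClause K C) (hPs : ∀ pn ∈ Ps, pn.1 ≠ subP ∧ pn.1 ≠ neqP)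
    (hsubneq : subP ≠ neqP) (hsub : eqP ≠ subP) (hneq : eqP ≠ neqP) {C : Clause P F}
    (hC : C ∈ EAX eqP (insert (subP, 2) (insert (neqP, 2) Ps)) Fs) :
    satClause (blockingModel eqP neqP subP K) C := by
  rcases mem_EAX_insert.1 hC with rfl | hC
  · exact satClause_blockingModel_of_mem_heads (List.mem_singleton_self _) rfl
  rcases mem_EAX_insert.1 hC with rfl | hC
  · exact satClause_blockingModel_predCongrClause_neq (hK _ symmClause_mem_EAX)
      (hK _ transClause_mem_EAX) hsubneq hsub hneq
  refine satClause_blockingModel_of_ne hKg (fun a ha => ?_) (hK C hC)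
  rcases pred_of_mem_atoms_of_mem_EAX hC ha with h | h
  · exact h ▸ ⟨hsub, hneq⟩
  · exact hPs _ h

end Blocking

section Blsd
variable {P F : Type} {σ : Sig P F} {domP eqP neqP subP : P} {M : Set (Clause P F)}

theorem ne_of_mem_predsOf (hwf : WFSet σ M) {p : P} (hp : ∀ n, (p, n) ∉ σ.preds)
    {pn : P × ℕ} (hpn : pn ∈ predsOf M) : pn.1 ≠ p := by
  obtain ⟨C, hC, hpnC⟩ := hpn
  rintro rfl
  exact hp _ ((hwf C hC).1 pn hpnC)

theorem funcsOf_blsd_subset (hwf : WFSet σ M) :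
    funcsOf (blsd σ domP eqP neqP subP M) ⊆ σ.funcs := by
  rintro fn ⟨C, (hCM | rfl | ⟨fn', hfn', i, -, rfl⟩) | rfl | rfl, hfn⟩
  · exact (hwf C hCM).2 fn hfn
  all_goals simp [Clause.funcs, Clause.atoms, Atom.funcs, subAtom, domAtom, eqAtom,
    blockSplitHead, eqNeqBot, rangeVars] at hfn
  exact hfn ▸ hfn'

theorem predsOf_blsd_subset :
    predsOf (blsd σ domP eqP neqP subP M) ⊆
      insert (subP, 2) (insert (neqP, 2) (insert (eqP, 2) (insert (domP, 1) (predsOf M)))) := by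
  rintro pn ⟨C, (hCM | rfl | ⟨fn, -, i, -, rfl⟩) | rfl | rfl, hpn⟩
  · exact .inr (.inr (.inr (.inr ⟨C, hCM, hpn⟩)))
  all_goals
    simp only [Clause.preds, Clause.atoms, subAtom, domAtom, eqAtom, blockSplitHead, eqNeqBot,
      List.cons_append, List.nil_append, List.map_cons, List.map_nil, List.mem_cons,
      List.not_mem_nil, or_false, List.length_cons, List.length_nil] at hpn
    simp only [Set.mem_insert_iff]
    tauto

theorem eSatisfiable_blsd_of_satisfiable (hwf : WFSet σ M) (hdomM : (domP, 1) ∈ predsOf M)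
    (heq : (eqP, 2) ∈ σ.preds) (hsubFresh : ∀ n, (subP, n) ∉ σ.preds)
    (hneqFresh : ∀ n, (neqP, n) ∉ σ.preds) (hsubNeq : subP ≠ neqP)
    (hsat : Satisfiable (M ∪ EAX eqP (predsOf M) σ.funcs)) :
    ESatisfiable eqP (blsd σ domP eqP neqP subP M) := by
  obtain ⟨K, hKg, hK⟩ := hsat
  have heqsub : eqP ≠ subP := fun h => hsubFresh 2 (h ▸ heq)
  have heqneq : eqP ≠ neqP := fun h => hneqFresh 2 (h ▸ heq)
  have hfresh : ∀ pn ∈ predsOf M, pn.1 ≠ subP ∧ pn.1 ≠ neqP := fun pn hpn =>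
    ⟨ne_of_mem_predsOf hwf hsubFresh hpn, ne_of_mem_predsOf hwf hneqFresh hpn⟩
  have hKE : ∀ C ∈ EAX eqP (insert (eqP, 2) (predsOf M)) σ.funcs, satClause K C := by
    intro C hC
    rcases mem_EAX_insert.1 hC with rfl | hC
    · exact satClause_predCongrClause_self (hK _ (.inr symmClause_mem_EAX))
        (hK _ (.inr transClause_mem_EAX))
    · exact hK C (.inr hC)
  refine ⟨blockingModel eqP neqP subP K, fun a ha => ha.1, ?_⟩
  rintro C (((hCM | hCsub) | rfl | rfl) | hCE)
  · exact satClause_blockingModel_of_ne hKg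
      (fun a ha => hfresh _ ⟨C, hCM, List.mem_map_of_mem ha⟩) (hK C (.inl hCM))
  · rcases hCsub with rfl | ⟨fn, -, i, -, rfl⟩ <;>
      exact satClause_blockingModel_of_mem_heads (List.mem_singleton_self _) rfl
  · exact satClause_blockingModel_blockSplit hKg heqsub heqneq _
  · exact satClause_blockingModel_eqNeqBot hsubNeq heqsub heqneq
  · have hpreds : predsOf (blsd σ domP eqP neqP subP M) ⊆
        insert (subP, 2) (insert (neqP, 2) (insert (eqP, 2) (predsOf M))) := by
      rw [← Set.insert_eq_of_mem hdomM]
      exact predsOf_blsd_subset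
    refine satClause_blockingModel_of_mem_EAX hKg hKE ?_ hsubNeq heqsub heqneq
      (EAX_mono hpreds (funcsOf_blsd_subset hwf) hCE)
    rintro pn (rfl | hpn)
    exacts [⟨heqsub, heqneq⟩, hfresh pn hpn]

end Blsd

theorem blsd_soundness_general {P F : Type}
    (σ : Sig P F) (domP eqP neqP subP : P) (M : Set (Clause P F))
    (hwf : WFSet σ M)
    (hdomM : (domP, 1) ∈ predsOf M)
    (heq : (eqP, 2) ∈ σ.preds)
    (hsubFresh : ∀ n, (subP, n) ∉ σ.preds)
    (hneqFresh : ∀ n, (neqP, n) ∉ σ.preds)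
    (hsubNeq : subP ≠ neqP)
    (hsat : ESatisfiable eqP M) :
    ESatisfiable eqP (blsd σ domP eqP neqP subP M) :=
  eSatisfiable_blsd_of_satisfiable hwf hdomM heq hsubFresh hneqFresh hsubNeq
    (hsat.satisfiable_union_EAX σ.funcs)

/-- **Soundness of subterm domain blocking**: for every clause set `M`, if `M` is
E-satisfiable then `blsd(M)` is E-satisfiable. `M` contains the unary predicate `dom`,
`sub` is a fresh binary predicate symbol not in `Σ_P` and not occurring in `M`, and `≉`
(`neqP`) is a fresh binary predicate symbol uniquely associated with `≈` and not occurring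
in `M`. -/
theorem blsd_soundness {P F : Type} [DecidableEq P] [DecidableEq F]
    (σ : Sig P F) (domP eqP neqP subP : P) (M : Set (Clause P F))
    (hfin : M.Finite) (hwf : WFSet σ M)
    (hdomM : (domP, 1) ∈ predsOf M)
    (heq : (eqP, 2) ∈ σ.preds)
    (hsubFresh : ∀ n, (subP, n) ∉ σ.preds)
    (hneqFresh : ∀ n, (neqP, n) ∉ σ.preds)
    (hsubNeq : subP ≠ neqP)
    (hsat : ESatisfiable eqP M) :
    ESatisfiable eqP (blsd σ domP eqP neqP subP M) :=
  blsd_soundness_general σ domP eqP neqP subP M hwf hdomM heq hsubFresh hneqFresh hsubNeq hsat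

end BUMG
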